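/- Identify ℝ^m with ℝ^{m−n} × ℝ^n and let e_1, …, e_n be the constant vector fields given by the standard basis vectors of the second factor. Let U ⊆ ℝ^m be open, let F be a smooth vector field on U, set W_i := [F, e_i], assume the 2n vectors e_1(z), …, e_n(z), W_1(z), …, W_n(z) are linearly independent at every z ∈ U, and let α^k_{ij}, β^k_{ij} : U → ℝ be smooth functions with [e_i, W_j] = α^k_{ij} e_k + β^k_{ij} W_k on U. Then both coefficient families are symmetric in their lower indices: α^k_{ij} = α^k_{ji} and β^k_{ij} = β^k_{ji} on U for all i, j, k. -/

import Mathlib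

/-!
Since the `e_i` are constant, `[e_i, [F, e_j]](z) = -D²F(z)(e_i, e_j)`, which is symmetric in
`i, j` by the symmetry of second derivatives (this is the Jacobi identity with `[e_i, e_j] = 0`).
So both expansions `[e_i, W_j] = [e_j, W_i]` in the frame `{e_k, W_k}` agree, and linear
independence of the frame forces their coefficients to agree.
-/

/-- The Lie bracket of two vector fields (as maps `E → E`), defined via the
Fréchet derivative: `[X,Y](z) = DY(z)(X(z)) − DX(z)(Y(z))`. -/
noncomputable def lieB {E : Type*} [NormedAddCommGroup E] [NormedSpace ℝ E]
    (X Y : E → E) : E → E :=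
  fun z => fderiv ℝ Y z (X z) - fderiv ℝ X z (Y z)

/-- The constant vector field `∂/∂y^i` on `ℝ^{m−n} × ℝ^n` (here `p = m − n`). -/
def eVec (p n : ℕ) (i : Fin n) : (Fin p → ℝ) × (Fin n → ℝ) := (0, Pi.single i 1)

theorem LinearIndependent.eq_of_sum_elim {R M ι κ : Type*} [Semiring R] [AddCommMonoid M]
    [Module R M] [Fintype ι] [Fintype κ] {u : ι → M} {w : κ → M}
    (h : LinearIndependent R (Sum.elim u w)) {a a' : ι → R} {b b' : κ → R}
    (heq : ∑ i, a i • u i + ∑ k, b k • w k = ∑ i, a' i • u i + ∑ k, b' k • w k) :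
    a = a' ∧ b = b' := by
  have hcoeff := Fintype.linearIndependent_iffₛ.mp h (Sum.elim a b) (Sum.elim a' b')
    (by simpa only [Fintype.sum_sum_type, Sum.elim_inl, Sum.elim_inr] using heq)
  exact ⟨funext fun i => hcoeff (.inl i), funext fun k => hcoeff (.inr k)⟩

section LieBracket

variable {E : Type*} [NormedAddCommGroup E] [NormedSpace ℝ E]

theorem lieB_const_left (v : E) (Y : E → E) (z : E) :
    lieB (fun _ => v) Y z = fderiv ℝ Y z v := by
  simp [lieB]

theorem lieB_const_right (X : E → E) (v : E) :
    lieB X (fun _ => v) = fun z => -fderiv ℝ X z v := by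
  funext z
  simp [lieB]

theorem fderiv_lieB_const_right {F : E → E} {z : E} (hF : ContDiffAt ℝ 2 F z) (v w : E) :
    fderiv ℝ (lieB F fun _ => w) z v = -fderiv ℝ (fderiv ℝ F) z v w := by
  have hdF : DifferentiableAt ℝ (fderiv ℝ F) z :=
    (hF.fderiv_right (by norm_num)).differentiableAt one_ne_zero
  rw [lieB_const_right, ((hdF.hasFDerivAt.clm_apply (hasFDerivAt_const w z)).fun_neg).fderiv]
  simp

theorem lieB_const_lieB_const_comm {F : E → E} {z : E} (hF : ContDiffAt ℝ 2 F z) (v w : E) :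
    lieB (fun _ => v) (lieB F fun _ => w) z = lieB (fun _ => w) (lieB F fun _ => v) z := by
  rw [lieB_const_left, lieB_const_left, fderiv_lieB_const_right hF, fderiv_lieB_const_right hF,
    hF.isSymmSndFDerivAt (by simp [minSmoothness_of_isRCLikeNormedField])]

end LieBracket

theorem stmt14_general (p n : ℕ)
    (U : Set ((Fin p → ℝ) × (Fin n → ℝ))) (hU : IsOpen U)
    (F : ((Fin p → ℝ) × (Fin n → ℝ)) → (Fin p → ℝ) × (Fin n → ℝ))
    (hF : ContDiffOn ℝ (⊤ : ℕ∞) F U)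
    (W : Fin n → ((Fin p → ℝ) × (Fin n → ℝ)) → (Fin p → ℝ) × (Fin n → ℝ))
    (hW : ∀ i, W i = lieB F (fun _ => eVec p n i))
    (hli : ∀ z ∈ U, LinearIndependent ℝ
      (Sum.elim (fun i : Fin n => eVec p n i) (fun i : Fin n => W i z)))
    -- `α i j k` stands for `α^k_{ij}`, and `β i j k` for `β^k_{ij}`
    (α β : Fin n → Fin n → Fin n → ((Fin p → ℝ) × (Fin n → ℝ)) → ℝ)
    (hrel : ∀ i j, ∀ z ∈ U,
      lieB (fun _ => eVec p n i) (W j) z =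
        (∑ k, α i j k z • eVec p n k) + ∑ k, β i j k z • W k z) :
    ∀ i j k, ∀ z ∈ U, α i j k z = α j i k z ∧ β i j k z = β j i k z := by
  intro i j k z hz
  have hF2 : ContDiffAt ℝ 2 F z :=
    (hF.contDiffAt (hU.mem_nhds hz)).of_le (WithTop.coe_le_coe.mpr le_top)
  have hcomm : lieB (fun _ => eVec p n i) (W j) z = lieB (fun _ => eVec p n j) (W i) z := by
    rw [hW, hW]
    exact lieB_const_lieB_const_comm hF2 _ _
  obtain ⟨hα, hβ⟩ :=
    (hli z hz).eq_of_sum_elim ((hrel i j z hz).symm.trans (hcomm.trans (hrel j i z hz)))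
  exact ⟨congrFun hα k, congrFun hβ k⟩

theorem stmt14 (p n : ℕ)
    (U : Set ((Fin p → ℝ) × (Fin n → ℝ))) (hU : IsOpen U)
    (F : ((Fin p → ℝ) × (Fin n → ℝ)) → (Fin p → ℝ) × (Fin n → ℝ))
    (hF : ContDiffOn ℝ (⊤ : ℕ∞) F U)
    (W : Fin n → ((Fin p → ℝ) × (Fin n → ℝ)) → (Fin p → ℝ) × (Fin n → ℝ))
    (hW : ∀ i, W i = lieB F (fun _ => eVec p n i))
    (hli : ∀ z ∈ U, LinearIndependent ℝ
      (Sum.elim (fun i : Fin n => eVec p n i) (fun i : Fin n => W i z)))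
    -- `α i j k` stands for `α^k_{ij}`, and `β i j k` for `β^k_{ij}`
    (α β : Fin n → Fin n → Fin n → ((Fin p → ℝ) × (Fin n → ℝ)) → ℝ)
    (hα : ∀ i j k, ContDiffOn ℝ (⊤ : ℕ∞) (α i j k) U)
    (hβ : ∀ i j k, ContDiffOn ℝ (⊤ : ℕ∞) (β i j k) U)
    (hrel : ∀ i j, ∀ z ∈ U,
      lieB (fun _ => eVec p n i) (W j) z =
        (∑ k, α i j k z • eVec p n k) + ∑ k, β i j k z • W k z) :
    ∀ i j k, ∀ z ∈ U, α i j k z = α j i k z ∧ β i j k z = β j i k z :=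
  stmt14_general p n U hU F hF W hW hli α β hrel
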